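/- arXiv:1603.07033 — 2 statements merged into one kernel-verified Lean document; each statement's English description precedes it below -/
import Mathlib

section
/- Let h : ℝ → ℝ be continuous and T-periodic with h(t) < ω² for all t, where ω = 2π/T. If w : ℝ → ℝ is a C² T-periodic function with ∫₀ᵀ w(t) dt = 0 satisfying w''(t) + c·w'(t) + h(t)·w(t) = μ for all t (where c, μ are real constants), then w ≡ 0 and μ = 0. -/
open MeasureTheory intervalIntegral Real Set

/-! Multiplying the equation by `w` and integrating over a period, the periodicity of `w` and
`w'` kills the boundary terms of the integrations by parts and the zero average kills `μ`, leaving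
`∫ w'² = ∫ h w²`. Since `w` has zero average, Wirtinger's inequality `ω² ∫ w² ≤ ∫ w'²` (proved via
Parseval: the `n`-th Fourier coefficient of `w'` is `i n ω` times that of `w`, and the zeroth
coefficient of `w` vanishes) gives `∫ (ω² - h) w² ≤ 0`; as `ω² - h > 0`, `w = 0`, and then `μ = 0`. -/

theorem Function.Periodic.deriv {𝕜 F : Type*} [NontriviallyNormedField 𝕜] [NormedAddCommGroup F]
    [NormedSpace 𝕜 F] {f : 𝕜 → F} {c : 𝕜} (hf : Function.Periodic f c) :
    Function.Periodic (deriv f) c := fun x => by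
  rw [← deriv_comp_add_const, hf.funext]

section Wirtinger

open Complex

variable {a b : ℝ}

theorem memLp_two_restrict_Ioc_of_continuousOn {f : ℝ → ℂ} (hf : ContinuousOn f (uIcc a b)) :
    MemLp f 2 (volume.restrict (Ioc a b)) := by
  have hsub : Ioc a b ⊆ uIcc a b := Ioc_subset_Icc_self.trans Icc_subset_uIcc
  refine (memLp_two_iff_integrable_sq_norm ?_).2 ?_
  · exact (hf.mono hsub).aestronglyMeasurable measurableSet_Ioc
  · exact ((hf.norm.pow 2).integrableOn_compact isCompact_uIcc).mono_set hsub

variable (hab : a < b)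
include hab

theorem fourierCoeffOn_zero (f : ℝ → ℂ) :
    fourierCoeffOn hab f 0 = (1 / (b - a)) • ∫ x in a..b, f x := by
  simp [fourierCoeffOn_eq_integral]

theorem mul_norm_fourierCoeffOn_le_of_hasDerivAt {f f' : ℝ → ℂ} {n : ℤ} (hn : n ≠ 0)
    (hf : ∀ x ∈ uIcc a b, HasDerivAt f (f' x) x) (hf' : IntervalIntegrable f' volume a b)
    (hfab : f a = f b) :
    2 * π / (b - a) * ‖fourierCoeffOn hab f n‖ ≤ ‖fourierCoeffOn hab f' n‖ := by
  have hn1 : (1 : ℝ) ≤ |(n : ℝ)| := by exact_mod_cast Int.one_le_abs hn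
  rw [fourierCoeffOn_of_hasDerivAt hab hn hf hf', hfab, sub_self, mul_zero, zero_sub, norm_mul,
    norm_neg, norm_mul, ← ofReal_sub, norm_real, norm_div, norm_one]
  simp only [norm_mul, norm_neg, Complex.norm_ofNat, norm_real, norm_I, mul_one, Real.norm_eq_abs,
    abs_of_pos pi_pos, abs_of_pos (sub_pos.2 hab), Complex.norm_intCast]
  have hba : b - a ≠ 0 := (sub_pos.2 hab).ne'
  calc _ = ‖fourierCoeffOn hab f' n‖ / |(n : ℝ)| := by field_simp
    _ ≤ _ := div_le_self (norm_nonneg _) hn1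

theorem wirtinger_inequality {f f' : ℝ → ℂ} (hf : ∀ x ∈ uIcc a b, HasDerivAt f (f' x) x)
    (hf' : ContinuousOn f' (uIcc a b)) (hfab : f a = f b) (hf0 : ∫ x in a..b, f x = 0) :
    (2 * π / (b - a)) ^ 2 * ∫ x in a..b, ‖f x‖ ^ 2 ≤ ∫ x in a..b, ‖f' x‖ ^ 2 := by
  have hfc : ContinuousOn f (uIcc a b) := fun x hx => (hf x hx).continuousAt.continuousWithinAt
  have hcoeff (n : ℤ) :
      (2 * π / (b - a)) ^ 2 * ‖fourierCoeffOn hab f n‖ ^ 2 ≤ ‖fourierCoeffOn hab f' n‖ ^ 2 := by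
    rcases eq_or_ne n 0 with rfl | hn
    · rw [fourierCoeffOn_zero, hf0, smul_zero, norm_zero, sq 0, mul_zero, mul_zero]
      positivity
    · rw [← mul_pow]
      exact pow_le_pow_left₀ (by positivity)
        (mul_norm_fourierCoeffOn_le_of_hasDerivAt hab hn hf hf'.intervalIntegrable hfab) 2
  have hparseval := hasSum_le hcoeff
    ((hasSum_sq_fourierCoeffOn hab (memLp_two_restrict_Ioc_of_continuousOn hfc)).mul_left _)
    (hasSum_sq_fourierCoeffOn hab (memLp_two_restrict_Ioc_of_continuousOn hf'))
  rwa [smul_eq_mul, smul_eq_mul, mul_left_comm, mul_le_mul_iff_right₀ (by simpa using hab)]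
    at hparseval

theorem wirtinger_inequality_real {u u' : ℝ → ℝ} (hu : ∀ x ∈ uIcc a b, HasDerivAt u (u' x) x)
    (hu' : ContinuousOn u' (uIcc a b)) (huab : u a = u b) (hu0 : ∫ x in a..b, u x = 0) :
    (2 * π / (b - a)) ^ 2 * ∫ x in a..b, u x ^ 2 ≤ ∫ x in a..b, u' x ^ 2 := by
  simpa only [norm_real, Real.norm_eq_abs, sq_abs] using
    wirtinger_inequality hab (f := fun x => (u x : ℂ)) (f' := fun x => (u' x : ℂ))
      (fun x hx => (hu x hx).ofReal_comp) (continuous_ofReal.comp_continuousOn hu')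
      (by rw [huab]) (by rw [intervalIntegral.integral_ofReal, hu0, ofReal_zero])

end Wirtinger

section Energy

variable {a b : ℝ}

theorem integral_mul_deriv_self_eq_zero {u u' : ℝ → ℝ}
    (hu : ∀ x ∈ uIcc a b, HasDerivAt u (u' x) x) (hu' : IntervalIntegrable u' volume a b)
    (huab : u a = u b) :
    ∫ x in a..b, u x * u' x = 0 := by
  have hparts := integral_mul_deriv_eq_deriv_mul hu hu hu' hu'
  simp only [huab, sub_self, zero_sub, mul_comm (u' _)] at hparts
  linarith

theorem integral_deriv_sq_eq_integral_mul_sq {c μ : ℝ} {h u : ℝ → ℝ} (hu : ContDiff ℝ 2 u)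
    (huab : u a = u b) (hu'ab : deriv u a = deriv u b) (hu0 : ∫ x in a..b, u x = 0)
    (heq : ∀ x, iteratedDeriv 2 u x + c * deriv u x + h x * u x = μ) :
    ∫ x in a..b, deriv u x ^ 2 = ∫ x in a..b, h x * u x ^ 2 := by
  have hu₁ : ContDiff ℝ 1 (deriv u) := hu.iterate_deriv' 1 1
  have hderiv_deriv : deriv (deriv u) = iteratedDeriv 2 u := by
    rw [iteratedDeriv_succ, iteratedDeriv_one]
  have hc : Continuous u := hu.continuous
  have hc' : Continuous (deriv u) := hu₁.continuous
  have hc'' : Continuous (iteratedDeriv 2 u) := hu.continuous_iteratedDeriv' 2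
  have hd (x : ℝ) : HasDerivAt u (deriv u x) x :=
    (hu.differentiable two_ne_zero x).hasDerivAt
  have hd' (x : ℝ) : HasDerivAt (deriv u) (iteratedDeriv 2 u x) x :=
    hderiv_deriv ▸ (hu₁.differentiable one_ne_zero x).hasDerivAt
  have hfirst : ∫ x in a..b, u x * deriv u x = 0 :=
    integral_mul_deriv_self_eq_zero (fun x _ => hd x) (hc'.intervalIntegrable a b) huab
  have hsecond : ∫ x in a..b, u x * iteratedDeriv 2 u x = -∫ x in a..b, deriv u x ^ 2 := by
    rw [integral_mul_deriv_eq_deriv_mul (fun x _ => hd x) (fun x _ => hd' x)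
      (hc'.intervalIntegrable a b) (hc''.intervalIntegrable a b), huab, hu'ab]
    simp [sq]
  have hpoint (x : ℝ) :
      h x * u x ^ 2 = μ * u x - c * (u x * deriv u x) - u x * iteratedDeriv 2 u x := by
    rw [← heq x]
    ring
  rw [integral_congr fun x _ => hpoint x, intervalIntegral.integral_sub,
    intervalIntegral.integral_sub, intervalIntegral.integral_const_mul,
    intervalIntegral.integral_const_mul, hu0, hfirst, hsecond]
  · ring
  all_goals exact Continuous.intervalIntegrable (by fun_prop) a b

end Energy

theorem eqOn_zero_of_integral_mul_sq_nonpos {a b : ℝ} (hab : a < b) {g u : ℝ → ℝ}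
    (hg : ContinuousOn g (Icc a b)) (hgpos : ∀ x ∈ Icc a b, 0 < g x)
    (hu : ContinuousOn u (Icc a b)) (hint : ∫ x in a..b, g x * u x ^ 2 ≤ 0) :
    EqOn u 0 (Icc a b) := by
  intro x hx
  by_contra hux
  refine hint.not_gt (integral_pos hab (hg.mul (hu.pow 2)) ?_ ⟨x, hx, ?_⟩)
  · exact fun y hy => mul_nonneg (hgpos y (Ioc_subset_Icc_self hy)).le (sq_nonneg _)
  · have hux' : u x ≠ 0 := hux
    have := hgpos x hx
    positivity

theorem zero_average_linear_trivial_general (T : ℝ) (hT : 0 < T) (c μ : ℝ) (h w : ℝ → ℝ)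
    (hh : Continuous h)
    (hhbd : ∀ t, h t < (2 * π / T) ^ 2)
    (hw : ContDiff ℝ 2 w) (hwper : Function.Periodic w T)
    (hwavg : ∫ t in (0:ℝ)..T, w t = 0)
    (heq : ∀ t, iteratedDeriv 2 w t + c * deriv w t + h t * w t = μ) :
    (∀ t, w t = 0) ∧ μ = 0 := by
  have hw0T : w 0 = w T := by simpa using (hwper 0).symm
  have hw'0T : deriv w 0 = deriv w T := by simpa using (hwper.deriv 0).symm
  have henergy := integral_deriv_sq_eq_integral_mul_sq hw hw0T hw'0T hwavg heq
  have hwirtinger := wirtinger_inequality_real hT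
    (fun x _ => (hw.differentiable two_ne_zero x).hasDerivAt)
    (hw.continuous_deriv one_le_two).continuousOn hw0T hwavg
  rw [sub_zero] at hwirtinger
  have hnonpos : ∫ t in (0:ℝ)..T, ((2 * π / T) ^ 2 - h t) * w t ^ 2 ≤ 0 := by
    simp only [sub_mul]
    rw [intervalIntegral.integral_sub, intervalIntegral.integral_const_mul]
    · linarith
    all_goals exact Continuous.intervalIntegrable (by fun_prop) 0 T
  have hzero : EqOn w 0 (Icc 0 T) :=
    eqOn_zero_of_integral_mul_sq_nonpos hT (by fun_prop) (fun t _ => sub_pos.2 (hhbd t))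
      hw.continuous.continuousOn hnonpos
  have hw_eq_zero (t : ℝ) : w t = 0 := by
    obtain ⟨s, hs, hts⟩ := hwper.exists_mem_Ico₀ hT t
    exact hts.trans (hzero (Ico_subset_Icc_self hs))
  refine ⟨hw_eq_zero, ?_⟩
  simpa [funext hw_eq_zero] using (heq 0).symm

/-- The only `T`-periodic zero-average solution of `w'' + c w' + h w = μ`, when
`h < ω²`, is the trivial one `w ≡ 0`, `μ = 0`. -/
theorem zero_average_linear_trivial (T : ℝ) (hT : 0 < T) (c μ : ℝ) (h w : ℝ → ℝ)
    (hh : Continuous h) (hhper : Function.Periodic h T)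
    (hhbd : ∀ t, h t < (2 * π / T) ^ 2)
    (hw : ContDiff ℝ 2 w) (hwper : Function.Periodic w T)
    (hwavg : ∫ t in (0:ℝ)..T, w t = 0)
    (heq : ∀ t, iteratedDeriv 2 w t + c * deriv w t + h t * w t = μ) :
    (∀ t, w t = 0) ∧ μ = 0 :=
  zero_average_linear_trivial_general T hT c μ h w hh hhbd hw hwper hwavg heq
end

section
/- Let h : ℝ → ℝ be continuous and T-periodic with h(t) < c²/4 + ω² for all t, where ω = 2π/T. Then any nontrivial C² T-periodic solution w of w''(t) + c·w'(t) + h(t)·w(t) = 0 has no zeros, i.e., is of one sign. -/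
/-!
Put `v = e^{ct/2} w`, so that `v'' + (h - c²/4) v = 0` with `h - c²/4 < ω²`. Comparing `v` with
`sin (ω (t - α))` through their Wronskian (Sturm) shows that every nodal interval of `w` is longer
than `π / ω = T / 2`, and uniqueness for the ODE shows that no zero of a nontrivial solution is a
local extremum. If the `T`-periodic `w` vanished at `a`, then `[a, a + T]` would contain a nodal
interval `(α, β)`. For `β = α + T`, `w` has one sign off `α + Tℤ`, so `α` is an extremum; for
`β < α + T`, the zeros `β < α + T` bound a second nodal interval, and the two would fit into one
period although each is longer than half of it.
-/

open Real Set Filter Topology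

theorem IsPreconnected.pos_or_neg_of_ne_zero {X α : Type*} [TopologicalSpace X] [LinearOrder α]
    [TopologicalSpace α] [OrderClosedTopology α] [Zero α] {s : Set X} (hs : IsPreconnected s)
    {f : X → α} (hf : ContinuousOn f s) (hne : ∀ x ∈ s, f x ≠ 0) :
    (∀ x ∈ s, 0 < f x) ∨ ∀ x ∈ s, f x < 0 := by
  by_contra! ⟨⟨x, hx, hfx⟩, y, hy, hfy⟩
  obtain ⟨z, hz, hfz⟩ := hs.intermediate_value hx hy hf ⟨hfx, hfy⟩
  exact hne z hz hfz

theorem HasDerivAt.nonpos_of_pos_of_eq_zero {f : ℝ → ℝ} {f' a b : ℝ} (hf : HasDerivAt f f' b)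
    (hab : a < b) (hb : f b = 0) (hpos : ∀ t ∈ Ioo a b, 0 < f t) : f' ≤ 0 := by
  have hslope : Tendsto (slope f b) (𝓝[<] b) (𝓝 f') := by
    simpa using hasDerivWithinAt_iff_tendsto_slope.mp (hf.hasDerivWithinAt (s := Iio b))
  refine le_of_tendsto hslope ?_
  filter_upwards [Ioo_mem_nhdsLT hab] with t ht
  rw [slope_def_field, hb, sub_zero]
  exact div_nonpos_of_nonneg_of_nonpos (hpos t ht).le (by linarith [ht.2])

structure IsNodalInterval (f : ℝ → ℝ) (α β : ℝ) : Prop where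
  lt : α < β
  left : f α = 0
  right : f β = 0
  ne_zero : ∀ t ∈ Ioo α β, f t ≠ 0

theorem exists_isNodalInterval {f : ℝ → ℝ} (hf : Continuous f)
    (hext : ∀ s, f s = 0 → ¬IsLocalExtr f s) {p q : ℝ} (hpq : p < q) (hp : f p = 0)
    (hq : f q = 0) : ∃ α β, p ≤ α ∧ β ≤ q ∧ IsNodalInterval f α β := by
  obtain ⟨t₀, ht₀, hft₀⟩ : ∃ t₀ ∈ Ioo p q, f t₀ ≠ 0 := by
    by_contra! h0
    have hm : (p + q) / 2 ∈ Ioo p q := ⟨by linarith, by linarith⟩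
    refine hext _ (h0 _ hm) (Or.inl ?_)
    filter_upwards [Ioo_mem_nhds hm.1 hm.2] with t ht
    rw [h0 _ hm, h0 t ht]
  have hZ : IsClosed (f ⁻¹' {0}) := isClosed_singleton.preimage hf
  set Zl := Icc p t₀ ∩ f ⁻¹' {0}
  set Zr := Icc t₀ q ∩ f ⁻¹' {0}
  have hZl : IsCompact Zl := isCompact_Icc.inter_right hZ
  have hZr : IsCompact Zr := isCompact_Icc.inter_right hZ
  have hαZ : sSup Zl ∈ Zl := hZl.sSup_mem ⟨p, ⟨le_rfl, ht₀.1.le⟩, hp⟩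
  have hβZ : sInf Zr ∈ Zr := hZr.sInf_mem ⟨q, ⟨ht₀.2.le, le_rfl⟩, hq⟩
  refine ⟨sSup Zl, sInf Zr, hαZ.1.1, hβZ.1.2, ⟨?_, hαZ.2, hβZ.2, fun t ht hft => ?_⟩⟩
  · exact (hαZ.1.2.lt_of_ne fun h => hft₀ (h ▸ hαZ.2)).trans_le hβZ.1.1
  · rcases le_total t t₀ with htt | htt
    · exact ht.1.not_ge (le_csSup hZl.bddAbove ⟨⟨hαZ.1.1.trans ht.1.le, htt⟩, hft⟩)
    · exact ht.2.not_ge (csInf_le hZr.bddBelow ⟨⟨htt, ht.2.le.trans hβZ.1.2⟩, hft⟩)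

namespace Function.Periodic

variable {f : ℝ → ℝ} {T : ℝ}

theorem isLocalExtr_of_isNodalInterval (hper : Periodic f T) (hf : Continuous f) (hT : 0 < T)
    {α : ℝ} (hI : IsNodalInterval f α (α + T)) : IsLocalExtr f α := by
  have hreduce : ∀ t, f t = f α ∨ ∃ y ∈ Ioo α (α + T), f t = f y := fun t => by
    obtain ⟨y, hy, hty⟩ := hper.exists_mem_Ico hT t α
    rcases hy.1.eq_or_lt with rfl | hαy
    · exact Or.inl hty
    · exact Or.inr ⟨y, ⟨hαy, hy.2⟩, hty⟩
  rcases isPreconnected_Ioo.pos_or_neg_of_ne_zero hf.continuousOn hI.ne_zero with hpos | hneg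
  · refine Or.inl (Eventually.of_forall fun t => ?_)
    rcases hreduce t with ht | ⟨y, hy, hty⟩
    · exact ht.ge
    · exact hI.left ▸ hty ▸ (hpos y hy).le
  · refine Or.inr (Eventually.of_forall fun t => ?_)
    rcases hreduce t with ht | ⟨y, hy, hty⟩
    · exact ht.le
    · exact hI.left ▸ hty ▸ (hneg y hy).le

theorem ne_zero_of_isNodalInterval_half_lt (hper : Periodic f T) (hf : Continuous f) (hT : 0 < T)
    (hext : ∀ s, f s = 0 → ¬IsLocalExtr f s)
    (hnodal : ∀ α β, IsNodalInterval f α β → T / 2 < β - α) (a : ℝ) : f a ≠ 0 := by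
  intro ha
  obtain ⟨α, β, haα, hβa, hI⟩ :=
    exists_isNodalInterval hf hext (by linarith) ha ((hper a).trans ha)
  rcases (hβa.trans (by linarith : a + T ≤ α + T)).eq_or_lt with rfl | hβT
  · exact hext α hI.left (hper.isLocalExtr_of_isNodalInterval hf hT hI)
  · obtain ⟨α', β', hβα', hβ'T, hI'⟩ :=
      exists_isNodalInterval hf hext hβT hI.right ((hper α).trans hI.left)
    linarith [hnodal α β hI, hnodal α' β' hI']

end Function.Periodic

structure SolvesLinearODE (c : ℝ) (h w w' : ℝ → ℝ) : Prop where
  hasDerivAt : ∀ t, HasDerivAt w (w' t) t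
  hasDerivAt_deriv : ∀ t, HasDerivAt w' (-(c * w' t + h t * w t)) t

theorem lipschitzWith_companion (c a : ℝ) :
    LipschitzWith (max 1 (‖c‖₊ + ‖a‖₊)) fun p : ℝ × ℝ => (p.2, -(c * p.2 + a * p.1)) := by
  have hc : LipschitzWith ‖c‖₊ fun p : ℝ × ℝ => c * p.2 := by
    rw [← mul_one ‖c‖₊]; exact (lipschitzWith_smul c).comp LipschitzWith.prod_snd
  have ha : LipschitzWith ‖a‖₊ fun p : ℝ × ℝ => a * p.1 := by
    rw [← mul_one ‖a‖₊]; exact (lipschitzWith_smul a).comp LipschitzWith.prod_fst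
  exact LipschitzWith.prod_snd.prodMk (hc.add ha).neg

theorem solvesLinearODE_sin (ω α : ℝ) :
    SolvesLinearODE 0 (fun _ => ω ^ 2) (fun t => sin (ω * (t - α)))
      (fun t => ω * cos (ω * (t - α))) where
  hasDerivAt t := by
    simpa [mul_comm] using (((hasDerivAt_id t).sub_const α).const_mul ω).sin
  hasDerivAt_deriv t := by
    refine ((((hasDerivAt_id t).sub_const α).const_mul ω).cos.const_mul ω).congr_deriv ?_
    simp only [id]; ring

theorem solvesLinearODE_of_contDiff {c : ℝ} {h w : ℝ → ℝ} (hw : ContDiff ℝ 2 w)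
    (heq : ∀ t, iteratedDeriv 2 w t + c * deriv w t + h t * w t = 0) :
    SolvesLinearODE c h w (deriv w) where
  hasDerivAt t := (hw.differentiable (by norm_num) t).hasDerivAt
  hasDerivAt_deriv t := by
    have hw' : Differentiable ℝ (deriv w) :=
      (contDiff_succ_iff_deriv.mp (show ContDiff ℝ (1 + 1) w from hw)).2.2.differentiable
        one_ne_zero
    rw [show -(c * deriv w t + h t * w t) = iteratedDeriv 2 w t by linarith [heq t],
      iteratedDeriv_succ, iteratedDeriv_one]
    exact (hw' t).hasDerivAt

namespace SolvesLinearODE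

variable {c : ℝ} {h w w' : ℝ → ℝ}

theorem continuous (hw : SolvesLinearODE c h w w') : Continuous w :=
  continuous_iff_continuousAt.2 fun t => (hw.hasDerivAt t).continuousAt

theorem neg (hw : SolvesLinearODE c h w w') : SolvesLinearODE c h (-w) (-w') where
  hasDerivAt t := (hw.hasDerivAt t).neg
  hasDerivAt_deriv t := by
    refine (hw.hasDerivAt_deriv t).neg.congr_deriv ?_
    simp only [Pi.neg_apply]; ring

theorem undamped (hw : SolvesLinearODE c h w w') :
    SolvesLinearODE 0 (fun t => h t - c ^ 2 / 4) (fun t => exp (c / 2 * t) * w t)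
      (fun t => exp (c / 2 * t) * (c / 2 * w t + w' t)) where
  hasDerivAt t := by
    refine (((hasDerivAt_id t).const_mul (c / 2)).exp.mul (hw.hasDerivAt t)).congr_deriv ?_
    simp only [id]; ring
  hasDerivAt_deriv t := by
    refine (((hasDerivAt_id t).const_mul (c / 2)).exp.mul
      (((hw.hasDerivAt t).const_mul (c / 2)).add (hw.hasDerivAt_deriv t))).congr_deriv ?_
    simp only [id, Pi.add_apply]; ring

theorem eq_zero_of_apply_eq_zero (hh : Continuous h) (hw : SolvesLinearODE c h w w') {s : ℝ}
    (hs : w s = 0) (hs' : w' s = 0) : w = 0 := by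
  funext t
  obtain ⟨A, B, hsAB, htAB⟩ : ∃ A B, s ∈ Ioo A B ∧ t ∈ Ioo A B :=
    ⟨min s t - 1, max s t + 1, by grind, by grind⟩
  obtain ⟨M, hM⟩ := (isCompact_Icc (a := A) (b := B)).bddAbove_image
    (continuous_nnnorm.comp hh).continuousOn
  have hlip : ∀ r ∈ Ioo A B, LipschitzOnWith (max 1 (‖c‖₊ + M))
      (fun p : ℝ × ℝ => (p.2, -(c * p.2 + h r * p.1))) univ := fun r hr =>
    ((lipschitzWith_companion c (h r)).weaken (max_le_max le_rfl (add_le_add_right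
      (hM (mem_image_of_mem _ (Ioo_subset_Icc_self hr))) _))).lipschitzOnWith
  have heqOn := ODE_solution_unique_of_mem_Ioo hlip hsAB (f := fun r => (w r, w' r)) (g := 0)
    (fun r _ => ⟨(hw.hasDerivAt r).prodMk (hw.hasDerivAt_deriv r), trivial⟩)
    (fun r _ => ⟨(hasDerivAt_const r (0 : ℝ × ℝ)).congr_deriv (by ext <;> simp), trivial⟩)
    (by simp [hs, hs'])
  exact congrArg Prod.fst (heqOn htAB)

theorem hasDerivAt_wronskian {q p v v' u u' : ℝ → ℝ} (hv : SolvesLinearODE 0 q v v')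
    (hu : SolvesLinearODE 0 p u u') (t : ℝ) :
    HasDerivAt (fun s => v' s * u s - v s * u' s) ((p t - q t) * v t * u t) t :=
  (((hv.hasDerivAt_deriv t).mul (hu.hasDerivAt t)).sub
    ((hv.hasDerivAt t).mul (hu.hasDerivAt_deriv t))).congr_deriv (by ring)

theorem pi_div_lt_of_pos {q v v' : ℝ → ℝ} (hv : SolvesLinearODE 0 q v v') {ω α β : ℝ}
    (hω : 0 < ω) (hq : ∀ t ∈ Ioo α β, q t < ω ^ 2) (hαβ : α < β) (hα : v α = 0) (hβ : v β = 0)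
    (hpos : ∀ t ∈ Ioo α β, 0 < v t) : π / ω < β - α := by
  -- the Wronskian with `sin (ω (t - α))` increases on `[α, β]`, vanishes at `α`, is `≤ 0` at `β`
  by_contra! hle
  have hπ : ω * (β - α) ≤ π := by rwa [le_div_iff₀ hω, mul_comm] at hle
  have hW := hv.hasDerivAt_wronskian (solvesLinearODE_sin ω α)
  obtain ⟨ξ, hξ, hslope⟩ := exists_hasDerivAt_eq_slope _ _ hαβ
    (HasDerivAt.continuousOn fun t _ => hW t) fun t _ => hW t
  have hsinξ : 0 < sin (ω * (ξ - α)) :=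
    sin_pos_of_pos_of_lt_pi (mul_pos hω (by linarith [hξ.1]))
      (lt_of_lt_of_le (mul_lt_mul_of_pos_left (by linarith [hξ.2]) hω) hπ)
  have hWξ : 0 < (ω ^ 2 - q ξ) * v ξ * sin (ω * (ξ - α)) :=
    mul_pos (mul_pos (by linarith [hq ξ hξ]) (hpos ξ hξ)) hsinξ
  have hv'β : v' β ≤ 0 := (hv.hasDerivAt β).nonpos_of_pos_of_eq_zero hαβ hβ hpos
  have hsinβ : 0 ≤ sin (ω * (β - α)) :=
    sin_nonneg_of_nonneg_of_le_pi (mul_nonneg hω.le (by linarith)) hπ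
  have hWβ : 0 < v' β * sin (ω * (β - α)) := by
    rw [hslope] at hWξ
    simpa [hα, hβ, div_pos_iff_of_pos_right (sub_pos.2 hαβ)] using hWξ
  exact hWβ.not_ge (mul_nonpos_of_nonpos_of_nonneg hv'β hsinβ)

theorem pi_div_lt_of_isNodalInterval (hw : SolvesLinearODE c h w w') {ω α β : ℝ} (hω : 0 < ω)
    (hh : ∀ t ∈ Ioo α β, h t < c ^ 2 / 4 + ω ^ 2) (hI : IsNodalInterval w α β) :
    π / ω < β - α := by
  have hq : ∀ t ∈ Ioo α β, h t - c ^ 2 / 4 < ω ^ 2 := fun t ht => by linarith [hh t ht]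
  rcases isPreconnected_Ioo.pos_or_neg_of_ne_zero hw.continuous.continuousOn hI.ne_zero with
    hpos | hneg
  · exact hw.undamped.pi_div_lt_of_pos hω hq hI.lt (by simp [hI.left]) (by simp [hI.right])
      fun t ht => mul_pos (exp_pos _) (hpos t ht)
  · exact hw.neg.undamped.pi_div_lt_of_pos hω hq hI.lt (by simp [hI.left]) (by simp [hI.right])
      fun t ht => mul_pos (exp_pos _) (neg_pos.2 (hneg t ht))

end SolvesLinearODE

theorem periodic_solution_one_sign_general (T : ℝ) (hT : 0 < T) (c : ℝ) (h w : ℝ → ℝ)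
    (hh : Continuous h)
    (hhbd : ∀ t, h t < c ^ 2 / 4 + (2 * π / T) ^ 2)
    (hw : ContDiff ℝ 2 w) (hwper : Function.Periodic w T)
    (hwne : ∃ t, w t ≠ 0)
    (heq : ∀ t, iteratedDeriv 2 w t + c * deriv w t + h t * w t = 0) :
    (∀ t, 0 < w t) ∨ (∀ t, w t < 0) := by
  have hsol := solvesLinearODE_of_contDiff hw heq
  have hext : ∀ s, w s = 0 → ¬IsLocalExtr w s := fun s hs hextr => by
    obtain ⟨t, ht⟩ := hwne
    exact ht (congrFun (hsol.eq_zero_of_apply_eq_zero hh hs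
      (hextr.hasDerivAt_eq_zero (hsol.hasDerivAt s))) t)
  have hnodal : ∀ α β, IsNodalInterval w α β → T / 2 < β - α := fun α β hI => by
    have hhalf : π / (2 * π / T) = T / 2 := by field_simp
    simpa only [hhalf] using
      hsol.pi_div_lt_of_isNodalInterval (by positivity) (fun t _ => hhbd t) hI
  have hne := hwper.ne_zero_of_isNodalInterval_half_lt hsol.continuous hT hext hnodal
  simpa using isPreconnected_univ.pos_or_neg_of_ne_zero hsol.continuous.continuousOn
    fun t _ => hne t

/-- If `h(t) < c²/4 + ω²`, any nontrivial `T`-periodic solution of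
`w'' + c w' + h w = 0` is of one sign. -/
theorem periodic_solution_one_sign (T : ℝ) (hT : 0 < T) (c : ℝ) (h w : ℝ → ℝ)
    (hh : Continuous h) (hhper : Function.Periodic h T)
    (hhbd : ∀ t, h t < c ^ 2 / 4 + (2 * π / T) ^ 2)
    (hw : ContDiff ℝ 2 w) (hwper : Function.Periodic w T)
    (hwne : ∃ t, w t ≠ 0)
    (heq : ∀ t, iteratedDeriv 2 w t + c * deriv w t + h t * w t = 0) :
    (∀ t, 0 < w t) ∨ (∀ t, w t < 0) :=
  periodic_solution_one_sign_general T hT c h w hh hhbd hw hwper hwne heq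
end
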